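/- In the contracted radius gadget (G',w'), every vertex v not belonging to {a_1,…,a_{2^s}} has eccentricity e_{G',w'}(v) ≥ 3α. -/

import Mathlib

open scoped ENNReal

set_option linter.unusedVariables false

/-- The length of a walk with respect to `ℝ≥0∞` edge weights. -/
noncomputable def wlen {V : Type*} (G : SimpleGraph V) (w : V → V → ℝ≥0∞) {u v : V}
    (p : G.Walk u v) : ℝ≥0∞ :=
  (p.darts.map fun d => w d.toProd.1 d.toProd.2).sum

/-- The weighted distance: the infimum of walk lengths. -/
noncomputable def wdist {V : Type*} (G : SimpleGraph V) (w : V → V → ℝ≥0∞) (u v : V) : ℝ≥0∞ :=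
  ⨅ p : G.Walk u v, wlen G w p

/-- Eccentricity `e_{G,w}(u) = max_v d_{G,w}(u,v)`. -/
noncomputable def wecc {V : Type*} (G : SimpleGraph V) (w : V → V → ℝ≥0∞) (u : V) : ℝ≥0∞ :=
  ⨆ v, wdist G w u v

/-- Weighted radius `R_{G,w} = min_u e_{G,w}(u)`. -/
noncomputable def wrad {V : Type*} (G : SimpleGraph V) (w : V → V → ℝ≥0∞) : ℝ≥0∞ :=
  ⨅ u, wecc G w u

/-- Vertices of the contracted radius gadget. -/
inductive CRV (s ℓ : ℕ) where
  /-- the hub `t` -/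
  | t
  /-- the extra node `a_0` -/
  | a0
  /-- node `a^z_{j+1}` -/
  | ah (z : Bool) (j : Fin s)
  /-- node `a*_{j+1}` -/
  | as (j : Fin ℓ)
  /-- node `a_{i+1}` -/
  | a (i : Fin (2 ^ s))
  /-- node `b_{i+1}` -/
  | b (i : Fin (2 ^ s))
  deriving DecidableEq, Fintype

/-- Base (oriented) adjacency of the contracted radius gadget.  Here `bin(i,j)` is
realized as `Nat.testBit` on the 0-based index, and `bin(i,j)⊕1` as its negation. -/
def crAdj0 {s ℓ : ℕ} : CRV s ℓ → CRV s ℓ → Prop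
  | .t, .ah _ _ => True
  | .t, .as _ => True
  | .a i, .ah z j => z = i.val.testBit j.val
  | .b i, .ah z j => z = !(i.val.testBit j.val)
  | .a i, .a i' => i ≠ i'
  | .b i, .b i' => i ≠ i'
  | .a _, .as _ => True
  | .b _, .as _ => True
  | .a0, .a _ => True
  | _, _ => False

/-- The contracted radius gadget graph. -/
def crGadget (s ℓ : ℕ) : SimpleGraph (CRV s ℓ) where
  Adj u v := u ≠ v ∧ (crAdj0 u v ∨ crAdj0 v u)
  symm := ⟨fun u v huv => ⟨huv.1.symm, huv.2.symm⟩⟩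
  loopless := ⟨fun u hu => hu.1 rfl⟩

/-- The weights of the contracted radius gadget: every edge has weight `α`, except
`a_i`–`a*_j` which has weight `α` if `x_{i,j}=1` and `β` otherwise, `b_i`–`a*_j` which
has weight `α` if `y_{i,j}=1` and `β` otherwise, and `a_0`–`a_i` which has weight `2α`. -/
def crW {s ℓ : ℕ} (x y : Fin (2 ^ s) → Fin ℓ → Bool) (α β : ℕ) : CRV s ℓ → CRV s ℓ → ℕ
  | .a i, .as j => if x i j then α else β
  | .as j, .a i => if x i j then α else β
  | .b i, .as j => if y i j then α else β
  | .as j, .b i => if y i j then α else β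
  | .a0, .a _ => 2 * α
  | .a _, .a0 => 2 * α
  | _, _ => α


/-!
Every edge weighs at least `α`, and every edge at `a_0` joins it to some `a_i` at weight `2α`.
Hence a walk from `a_0` to `t` costs `2α` for its first edge plus at least `α` for the rest,
while from any other vertex `v ∉ {a_i}` a walk to `a_0` costs at least `α` for its first edge,
which cannot already reach `a_0`, plus `2α` for its last edge.
-/

namespace SimpleGraph

variable {V : Type*} {G : SimpleGraph V} {w : V → V → ℝ≥0∞}

lemma wlen_cons {u v r : V} (h : G.Adj u v) (p : G.Walk v r) :
    wlen G w (.cons h p) = w u v + wlen G w p := by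
  simp [wlen]

lemma le_wlen_of_ne {c : ℝ≥0∞} (hw : ∀ a b, G.Adj a b → c ≤ w a b) {u v : V} (huv : u ≠ v)
    (p : G.Walk u v) : c ≤ wlen G w p := by
  cases p with
  | nil => exact absurd rfl huv
  | cons h q => exact (wlen_cons h q).symm ▸ (hw _ _ h).trans le_self_add

lemma exists_adj_le_wlen {u v : V} (huv : u ≠ v) (p : G.Walk u v) :
    ∃ a, G.Adj a v ∧ w a v ≤ wlen G w p := by
  induction p with
  | nil => exact absurd rfl huv
  | @cons u m v h q ih =>
    rw [wlen_cons]
    by_cases hm : m = v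
    · subst hm
      exact ⟨u, h, le_self_add⟩
    · obtain ⟨a, ha, hle⟩ := ih hm
      exact ⟨a, ha, hle.trans le_add_self⟩

lemma le_wecc_of_le_wdist {c : ℝ≥0∞} {u v : V} (h : c ≤ wdist G w u v) : c ≤ wecc G w u :=
  le_iSup_of_le v h

end SimpleGraph

open SimpleGraph

section Gadget

variable {s ℓ : ℕ}

lemma crGadget_adj_a0_iff {u : CRV s ℓ} : (crGadget s ℓ).Adj u .a0 ↔ ∃ i, u = .a i := by
  constructor
  · rintro ⟨-, h | h⟩ <;> cases u <;> simp_all [crAdj0]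
  · rintro ⟨i, rfl⟩
    exact ⟨nofun, Or.inr trivial⟩

lemma le_crW (x y : Fin (2 ^ s) → Fin ℓ → Bool) {α β : ℕ} (hαβ : α ≤ β) (p q : CRV s ℓ) :
    α ≤ crW x y α β p q := by
  cases p <;> cases q <;> simp only [crW] <;> (try split_ifs) <;> omega

variable (x y : Fin (2 ^ s) → Fin ℓ → Bool) {α β : ℕ}

local notation "W" => fun p q : CRV s ℓ => ((crW x y α β p q : ℕ) : ℝ≥0∞)

lemma le_wlen_crGadget (hαβ : α ≤ β) {u v : CRV s ℓ} (huv : u ≠ v)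
    (p : (crGadget s ℓ).Walk u v) : (α : ℝ≥0∞) ≤ wlen _ W p :=
  le_wlen_of_ne (fun a b _ => Nat.cast_le.mpr (le_crW x y hαβ a b)) huv p

lemma two_mul_le_wlen_crGadget_a0 {u : CRV s ℓ} (hu : u ≠ .a0)
    (p : (crGadget s ℓ).Walk u .a0) : ((2 * α : ℕ) : ℝ≥0∞) ≤ wlen _ W p := by
  obtain ⟨a, ha, hle⟩ := exists_adj_le_wlen (w := W) hu p
  obtain ⟨i, rfl⟩ := crGadget_adj_a0_iff.mp ha
  exact hle

end Gadget

theorem stmt8_general (s ℓ : ℕ)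
    (α β : ℕ) (hαβ : α ≤ β)
    (x y : Fin (2 ^ s) → Fin ℓ → Bool)
    (v : CRV s ℓ) (hv : ∀ i : Fin (2 ^ s), v ≠ CRV.a i) :
    ((3 * α : ℕ) : ℝ≥0∞) ≤
      wecc (crGadget s ℓ) (fun p q => ((crW x y α β p q : ℕ) : ℝ≥0∞)) v := by
  have h3 : ((3 * α : ℕ) : ℝ≥0∞) = ((2 * α : ℕ) : ℝ≥0∞) + α := by push_cast; ring
  by_cases hv0 : v = .a0
  · subst hv0
    refine le_wecc_of_le_wdist (v := .t) (le_iInf fun p => ?_)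
    cases p with
    | cons h q =>
      obtain ⟨i, rfl⟩ := crGadget_adj_a0_iff.mp h.symm
      rw [wlen_cons, h3]
      exact add_le_add le_rfl (le_wlen_crGadget x y hαβ (by simp) q)
  · refine le_wecc_of_le_wdist (v := .a0) (le_iInf fun p => ?_)
    cases p with
    | nil => exact absurd rfl hv0
    | @cons _ u _ h q =>
      have hu : u ≠ .a0 := by
        rintro rfl
        obtain ⟨i, rfl⟩ := crGadget_adj_a0_iff.mp h
        exact hv i rfl
      rw [wlen_cons, h3, add_comm]
      exact add_le_add (Nat.cast_le.mpr (le_crW x y hαβ v u))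
        (two_mul_le_wlen_crGadget_a0 x y hu q)

/-- In the contracted radius gadget `(G',w')`, every vertex `v` not
belonging to `{a_1,…,a_{2^s}}` has eccentricity `e_{G',w'}(v) ≥ 3α`. -/
theorem stmt8 (s ℓ : ℕ) (hs : 1 ≤ s) (hℓ : 1 ≤ ℓ)
    (α β : ℕ) (hα : 0 < α) (hαβ : α ≤ β)
    (x y : Fin (2 ^ s) → Fin ℓ → Bool)
    (v : CRV s ℓ) (hv : ∀ i : Fin (2 ^ s), v ≠ CRV.a i) :
    ((3 * α : ℕ) : ℝ≥0∞) ≤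
      wecc (crGadget s ℓ) (fun p q => ((crW x y α β p q : ℕ) : ℝ≥0∞)) v :=
  stmt8_general s ℓ α β hαβ x y v hv
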